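/- arXiv:2009.08054 — 2 statements merged into one kernel-verified Lean document; each statement's English description precedes it below -/
import Mathlib

section
/- For every g ≥ 1 and every integer d ≥ 3, the center of the semidirect product (ℤ/d)^{2g} ⋊ Sp(2g, ℤ), where Sp(2g, ℤ) acts on (ℤ/d)^{2g} by reducing matrix entries mod d and acting by matrix multiplication, is trivial. -/
/-!
Commuting with `(0, B)` for all `B` makes `v` fixed by the whole of `Sp(2g, ℤ)` and `A` central in
`Sp(2g, ℤ)`; commuting with `(w, 1)` for all `w` makes `A ≡ 1 mod d`. The two transvections
`[[1, 1], [0, 1]]` and `[[1, 0], [1, 1]]` already force `v = 0` and `A = diag(a, a)`. Commuting with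
`[[1, Eᵢᵢ], [0, 1]]` makes `a` diagonal, and the symplectic condition `aᵀa = 1` makes its diagonal
entries `±1`; as `-1 ≢ 1 mod d` for `d ≥ 3`, `A = 1`.
-/

open Matrix

section Transvections

variable {n R : Type*} [Fintype n] [DecidableEq n]

theorem fromBlocks_upper_mem_symplecticGroup [CommRing R] {S : Matrix n n R} (hS : Sᵀ = S) :
    fromBlocks 1 S 0 1 ∈ symplecticGroup n R := by
  simp [SymplecticGroup.fromBlocks_mem_iff, hS]

theorem fromBlocks_lower_mem_symplecticGroup [CommRing R] {S : Matrix n n R} (hS : Sᵀ = S) :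
    fromBlocks 1 0 S 1 ∈ symplecticGroup n R := by
  simp [SymplecticGroup.fromBlocks_mem_iff, hS]

theorem eq_zero_of_fromBlocks_mulVec_eq_self [Ring R] {v : n ⊕ n → R}
    (hU : fromBlocks 1 1 0 1 *ᵥ v = v) (hL : fromBlocks 1 0 1 1 *ᵥ v = v) : v = 0 := by
  funext i
  cases i with
  | inl i => simpa [fromBlocks_mulVec] using congrFun hL (Sum.inr i)
  | inr i => simpa [fromBlocks_mulVec] using congrFun hU (Sum.inl i)

theorem exists_eq_fromBlocks_of_commute [Ring R] {M : Matrix (n ⊕ n) (n ⊕ n) R}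
    (hU : Commute M (fromBlocks 1 1 0 1)) (hL : Commute M (fromBlocks 1 0 1 1)) :
    ∃ a, M = fromBlocks a 0 0 a := by
  rw [← fromBlocks_toBlocks M] at hU hL ⊢
  simp only [Commute, SemiconjBy, fromBlocks_multiply, fromBlocks_inj, Matrix.mul_one,
    Matrix.one_mul, Matrix.mul_zero, Matrix.zero_mul, add_zero, zero_add] at hU hL
  obtain ⟨hc, he, -, -⟩ := hU
  obtain ⟨hb, -, -, -⟩ := hL
  rw [add_eq_left] at hb
  rw [left_eq_add] at hc
  rw [hb, add_zero, zero_add] at he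
  exact ⟨M.toBlocks₁₁, by rw [hb, hc, he]⟩

theorem Commute.of_fromBlocks_upper [Ring R] {a S : Matrix n n R}
    (h : Commute (fromBlocks a 0 0 a) (fromBlocks 1 S 0 1)) : Commute a S := by
  simp only [Commute, SemiconjBy, fromBlocks_multiply, fromBlocks_inj] at h
  exact (by simpa using h.2.1 : a * S = S * a)

theorem eq_zero_of_forall_symplecticGroup_map_mulVec_eq [Ring R] {v : n ⊕ n → R}
    (h : ∀ N ∈ symplecticGroup n ℤ, N.map (Int.cast : ℤ → R) *ᵥ v = v) : v = 0 := by
  have hU := h _ (fromBlocks_upper_mem_symplecticGroup (transpose_one (α := ℤ)))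
  have hL := h _ (fromBlocks_lower_mem_symplecticGroup (transpose_one (α := ℤ)))
  simp only [fromBlocks_map, Matrix.map_one _ Int.cast_zero Int.cast_one,
    Matrix.map_zero _ Int.cast_zero] at hU hL
  exact eq_zero_of_fromBlocks_mulVec_eq_self hU hL

end Transvections

theorem Int.eq_one_of_mul_self_eq_one_of_cast_eq_one {d : ℕ} [Fact (2 < d)] {x : ℤ}
    (h : x * x = 1) (hx : (x : ZMod d) = 1) : x = 1 := by
  rcases Int.eq_one_or_neg_one_of_mul_eq_one h with rfl | rfl
  · rfl
  · exact absurd (by simpa using hx) ZMod.neg_one_ne_one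

theorem eq_one_of_commute_symplecticGroup_of_map_eq_one {n : Type*} [Fintype n] [DecidableEq n]
    {d : ℕ} [Fact (2 < d)] {M : Matrix (n ⊕ n) (n ⊕ n) ℤ} (hM : M ∈ symplecticGroup n ℤ)
    (hcomm : ∀ N ∈ symplecticGroup n ℤ, Commute M N)
    (hmod : M.map (Int.cast : ℤ → ZMod d) = 1) : M = 1 := by
  obtain ⟨a, rfl⟩ := exists_eq_fromBlocks_of_commute
    (hcomm _ (fromBlocks_upper_mem_symplecticGroup transpose_one))
    (hcomm _ (fromBlocks_lower_mem_symplecticGroup transpose_one))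
  have hoff : ∀ i k, k ≠ i → a k i = 0 := fun i k hki =>
    col_eq_zero_of_commute_single (j := i)
      (Commute.of_fromBlocks_upper (hcomm _ (fromBlocks_upper_mem_symplecticGroup
        (by simp [transpose_single])))).symm hki
  have horth : aᵀ * a = 1 := by
    simpa using (SymplecticGroup.fromBlocks_mem_iff.1 hM).2.2
  have hdiag : ∀ i, a i i = 1 := by
    intro i
    refine Int.eq_one_of_mul_self_eq_one_of_cast_eq_one (d := d) ?_ ?_
    · have := congrFun (congrFun horth i) i
      rwa [mul_apply, Finset.sum_eq_single i (fun k _ hki => by simp [hoff i k hki]) (by simp),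
        transpose_apply, one_apply_eq] at this
    · simpa using congrFun (congrFun hmod (Sum.inl i)) (Sum.inl i)
  have ha : a = 1 := by
    ext k i
    rcases eq_or_ne k i with rfl | hki
    · simp [hdiag]
    · simp [hoff i k hki, one_apply_ne hki]
  rw [ha, fromBlocks_one]

theorem stmt_2_general (g d : ℕ) (hd : 3 ≤ d)
    (v : Fin g ⊕ Fin g → ZMod d) (A : Matrix.symplecticGroup (Fin g) ℤ)
    (hcen : ∀ (w : Fin g ⊕ Fin g → ZMod d) (B : Matrix.symplecticGroup (Fin g) ℤ),
      v + ((A : Matrix (Fin g ⊕ Fin g) (Fin g ⊕ Fin g) ℤ).map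
            (Int.cast : ℤ → ZMod d)).mulVec w
        = w + ((B : Matrix (Fin g ⊕ Fin g) (Fin g ⊕ Fin g) ℤ).map
            (Int.cast : ℤ → ZMod d)).mulVec v
      ∧ A * B = B * A) :
    v = 0 ∧ A = 1 := by
  have : Fact (2 < d) := ⟨hd⟩
  have hv : v = 0 := eq_zero_of_forall_symplecticGroup_map_mulVec_eq fun N hN => by
    simpa using (hcen 0 ⟨N, hN⟩).1.symm
  refine ⟨hv, Subtype.ext (eq_one_of_commute_symplecticGroup_of_map_eq_one (d := d) A.2 ?_ ?_)⟩
  · exact fun N hN => congrArg Subtype.val (hcen 0 ⟨N, hN⟩).2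
  · refine ext_of_mulVec_single fun i => ?_
    rw [one_mulVec]
    simpa [hv] using (hcen (Pi.single i 1) 1).1

/-- For `g ≥ 1` and `d ≥ 3`, the center of the semidirect product
`(ℤ/d)^{2g} ⋊ Sp(2g, ℤ)` (where `Sp(2g, ℤ)` acts by reducing matrix entries
mod `d` and multiplying, and the multiplication is
`(v, A)(w, B) = (v + A·w, A·B)`) is trivial. -/
theorem stmt_2 (g d : ℕ) (hg : 1 ≤ g) (hd : 3 ≤ d)
    (v : Fin g ⊕ Fin g → ZMod d) (A : Matrix.symplecticGroup (Fin g) ℤ)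
    (hcen : ∀ (w : Fin g ⊕ Fin g → ZMod d) (B : Matrix.symplecticGroup (Fin g) ℤ),
      v + ((A : Matrix (Fin g ⊕ Fin g) (Fin g ⊕ Fin g) ℤ).map
            (Int.cast : ℤ → ZMod d)).mulVec w
        = w + ((B : Matrix (Fin g ⊕ Fin g) (Fin g ⊕ Fin g) ℤ).map
            (Int.cast : ℤ → ZMod d)).mulVec v
      ∧ A * B = B * A) :
    v = 0 ∧ A = 1 :=
  stmt_2_general g d hd v A hcen
end

section
/- For g ≥ 2 and any abelian group A, the coinvariants of the Sp(2g, ℤ)-module ℤ^{2g} ⊗ A (with the standard action on the first factor and trivial action on A) vanish: (ℤ^{2g} ⊗ A)_{Sp(2g,ℤ)} = 0. -/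
/-!
The block matrix `γ = [[1, 1], [-1, 0]]` (blocks of size `g`) is symplectic, and `γ - 1` is
invertible over `ℤ`: `γ² - γ + 1 = 0`, so `(γ - 1)⁻¹ = -γ`. Hence `γ - 1` stays surjective
after tensoring with `A`, so every element of `ℤ^{2g} ⊗ A` is already of the form `γ·m - m`.
-/

open Matrix

theorem LinearMap.rTensor_sub_one_surjective {R M N : Type*} [CommRing R] [AddCommGroup M]
    [Module R M] [AddCommGroup N] [Module R N] {f : Module.End R M}
    (hf : Function.Surjective ⇑(f - 1)) :
    Function.Surjective ⇑(f.rTensor N - 1) := by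
  rw [Module.End.one_eq_id, ← rTensor_id N M, ← rTensor_sub]
  exact rTensor_surjective N hf

namespace Matrix

variable {l R : Type*} [DecidableEq l] [Fintype l] [CommRing R]

theorem fromBlocks_one_one_neg_one_zero_mem_symplecticGroup :
    fromBlocks 1 1 (-1) 0 ∈ symplecticGroup l R := by
  rw [SymplecticGroup.fromBlocks_mem_iff]
  simp

theorem isUnit_fromBlocks_one_one_neg_one_zero_sub_one :
    IsUnit (fromBlocks 1 1 (-1) 0 - 1 : Matrix (l ⊕ l) (l ⊕ l) R) := by
  refine isUnit_iff_exists_inv.2 ⟨fromBlocks (-1) (-1) 1 0, ?_⟩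
  rw [← fromBlocks_one, sub_eq_add_neg, fromBlocks_neg, fromBlocks_add, fromBlocks_multiply]
  simp

end Matrix

theorem stmt_8_general (g : ℕ) (A : Type) [AddCommGroup A] :
    AddSubgroup.closure {x : TensorProduct ℤ (Fin g ⊕ Fin g → ℤ) A |
      ∃ (γ : Matrix.symplecticGroup (Fin g) ℤ)
        (m : TensorProduct ℤ (Fin g ⊕ Fin g → ℤ) A),
        x = TensorProduct.map
              (Matrix.mulVecLin
                (γ : Matrix (Fin g ⊕ Fin g) (Fin g ⊕ Fin g) ℤ))
              LinearMap.id m - m} = ⊤ := by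
  let γ : symplecticGroup (Fin g) ℤ := ⟨_, fromBlocks_one_one_neg_one_zero_mem_symplecticGroup⟩
  have hγ : Function.Surjective
      ⇑(mulVecLin (γ : Matrix (Fin g ⊕ Fin g) (Fin g ⊕ Fin g) ℤ) - 1) := by
    intro v
    obtain ⟨w, hw⟩ :=
      mulVec_surjective_iff_isUnit.2 isUnit_fromBlocks_one_one_neg_one_zero_sub_one v
    exact ⟨w, by simpa [sub_mulVec] using hw⟩
  rw [eq_top_iff]
  rintro x -
  obtain ⟨m, rfl⟩ := LinearMap.rTensor_sub_one_surjective (N := A) hγ x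
  exact AddSubgroup.subset_closure ⟨γ, m, rfl⟩

/-- For `g ≥ 2` and any abelian group `A`, the coinvariants of
the `Sp(2g, ℤ)`-module `ℤ^{2g} ⊗ A` vanish; equivalently, the subgroup
generated by all elements `γ·m − m` is the whole group. -/
theorem stmt_8 (g : ℕ) (hg : 2 ≤ g) (A : Type) [AddCommGroup A] :
    AddSubgroup.closure {x : TensorProduct ℤ (Fin g ⊕ Fin g → ℤ) A |
      ∃ (γ : Matrix.symplecticGroup (Fin g) ℤ)
        (m : TensorProduct ℤ (Fin g ⊕ Fin g → ℤ) A),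
        x = TensorProduct.map
              (Matrix.mulVecLin
                (γ : Matrix (Fin g ⊕ Fin g) (Fin g ⊕ Fin g) ℤ))
              LinearMap.id m - m} = ⊤ :=
  stmt_8_general g A
end
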